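/- arXiv:2601.12350 — 4 statements merged into one kernel-verified Lean document; each statement's English description precedes it below -/
import Mathlib

section
/- Suppose y ∈ C¹[0,T] satisfies y(0) = 0 and y'(t) ≤ A + B·y(t)² for all t ∈ [0,T], where A, B, T > 0 and √(AB)·T ≤ π/4. Then y(t) ≤ 2At for all t ∈ [0,T]. -/
/-!
With `s = √(AB)`, the rescaled function `z = (s / A) y` satisfies the Riccati inequality
`z' ≤ s (1 + z²)`, so `arctan z - s t` is antitone and `z t ≤ tan (s t)` as long as `s t < π / 2`.
For `s t ≤ π / 4` we have `cos (s t) ≥ 1 / 2`, hence `tan (s t) ≤ 2 s t`, which undoes the scaling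
to `y t ≤ 2 A t`.
-/

open Real Set

namespace Real

theorem tan_le_two_mul {x : ℝ} (h0 : 0 ≤ x) (h : x ≤ π / 3) : tan x ≤ 2 * x := by
  have hcos : 1 / 2 ≤ cos x := by
    rw [← cos_pi_div_three]
    exact cos_le_cos_of_nonneg_of_le_pi h0 (by linarith [pi_pos]) h
  rw [tan_eq_sin_div_cos, div_le_iff₀ (by linarith)]
  nlinarith [sin_le h0]

theorem le_tan_of_arctan_le {x θ : ℝ} (h : arctan x ≤ θ) (hθ : θ < π / 2) : x ≤ tan θ := by
  have hθ' : -(π / 2) < θ := (neg_pi_div_two_lt_arctan x).trans_le h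
  rwa [← arctan_le_arctan_iff, arctan_tan hθ' hθ]

end Real

theorem arctan_le_arctan_add_mul_of_hasDerivAt {z z' : ℝ → ℝ} {a b s : ℝ}
    (hz : ∀ t ∈ Icc a b, HasDerivAt z (z' t) t)
    (hle : ∀ t ∈ Icc a b, z' t ≤ s * (1 + z t ^ 2)) :
    ∀ t ∈ Icc a b, arctan (z t) ≤ arctan (z a) + s * (t - a) := by
  have hg : ∀ t ∈ Icc a b,
      HasDerivAt (fun u ↦ arctan (z u) - s * u) (1 / (1 + z t ^ 2) * z' t - s) t := fun t ht ↦
    ((hz t ht).arctan).sub ((hasDerivAt_id t).const_mul s |>.congr_deriv (mul_one s))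
  have hanti : AntitoneOn (fun u ↦ arctan (z u) - s * u) (Icc a b) := by
    refine antitoneOn_of_hasDerivWithinAt_nonpos (convex_Icc a b)
      (f' := fun t ↦ 1 / (1 + z t ^ 2) * z' t - s)
      (fun t ht ↦ (hg t ht).continuousAt.continuousWithinAt) (fun t ht ↦ ?_) (fun t ht ↦ ?_)
    · exact (hg t (interior_subset ht)).hasDerivWithinAt
    · have hpos : 0 < 1 + z t ^ 2 := by positivity
      rw [sub_nonpos, one_div_mul_eq_div, div_le_iff₀ hpos]
      exact hle t (interior_subset ht)
  intro t ht
  have := hanti (left_mem_Icc.mpr (ht.1.trans ht.2)) ht ht.1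
  simp only at this
  linarith

theorem div_mul_add_mul_sq {A B s : ℝ} (hA : A ≠ 0) (hs : s ^ 2 = A * B) (x : ℝ) :
    s / A * (A + B * x ^ 2) = s * (1 + (s / A * x) ^ 2) := by
  field_simp
  rw [hs]
  ring

theorem stmt_3_general (A B T : ℝ) (hA : 0 < A) (hB : 0 < B)
    (hABT : Real.sqrt (A * B) * T ≤ Real.pi / 4)
    (y y' : ℝ → ℝ)
    (hderiv : ∀ t ∈ Set.Icc (0 : ℝ) T, HasDerivAt y (y' t) t)
    (hy0 : y 0 = 0)
    (hineq : ∀ t ∈ Set.Icc (0 : ℝ) T, y' t ≤ A + B * (y t) ^ 2) :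
    ∀ t ∈ Set.Icc (0 : ℝ) T, y t ≤ 2 * A * t := by
  set s := √(A * B)
  have hs : 0 < s := sqrt_pos.mpr (mul_pos hA hB)
  have hs_sq : s ^ 2 = A * B := sq_sqrt (mul_pos hA hB).le
  have harctan := arctan_le_arctan_add_mul_of_hasDerivAt (z := fun u ↦ s / A * y u)
    (fun t ht ↦ (hderiv t ht).const_mul (s / A)) fun t ht ↦ by
      rw [← div_mul_add_mul_sq hA.ne' hs_sq]
      exact mul_le_mul_of_nonneg_left (hineq t ht) (by positivity)
  intro t ht
  have hst : s * t ≤ π / 4 := (mul_le_mul_of_nonneg_left ht.2 hs.le).trans hABT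
  have hz : s / A * y t ≤ 2 * (s * t) := by
    refine (le_tan_of_arctan_le (θ := s * t) ?_ (by linarith [pi_pos])).trans
      (tan_le_two_mul (mul_nonneg hs.le ht.1) (by linarith [pi_pos]))
    simpa [hy0] using harctan t ht
  rw [div_mul_eq_mul_div, div_le_iff₀ hA] at hz
  exact le_of_mul_le_mul_left (by linarith) hs

theorem stmt_3 (A B T : ℝ) (hA : 0 < A) (hB : 0 < B) (hT : 0 < T)
    (hABT : Real.sqrt (A * B) * T ≤ Real.pi / 4)
    (y y' : ℝ → ℝ)
    (hderiv : ∀ t ∈ Set.Icc (0 : ℝ) T, HasDerivAt y (y' t) t)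
    (hcont : ContinuousOn y' (Set.Icc 0 T))
    (hy0 : y 0 = 0)
    (hineq : ∀ t ∈ Set.Icc (0 : ℝ) T, y' t ≤ A + B * (y t) ^ 2) :
    ∀ t ∈ Set.Icc (0 : ℝ) T, y t ≤ 2 * A * t :=
  stmt_3_general A B T hA hB hABT y y' hderiv hy0 hineq
end

section
/- Let f : (0,∞) → ℝ be C², with f > 0, f' > 0, f'' > 0 on (0,∞), and suppose F(u) := ∫_u^∞ ds/f(s) is finite for every u > 0. If there exist constants q₁, q₂ > 0 such that q₁ ≤ f'(u)²/(f(u)·f''(u)) ≤ q₂ for all u > 0, then q₁/f'(u) ≤ F(u) ≤ q₂/f'(u) for all u > 0, i.e., q₁ ≤ f'(u)·F(u) ≤ q₂ for all u > 0. -/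
/-! With `F u = ∫ s in Ioi u, 1 / f s` we have `F' = -1 / f`, so for a constant `q` the function
`G_q = F - q / f'` has derivative `(q - f'² / (f f'')) · f'' / f'²`. The hypothesis makes `G_{q₁}`
antitone and `G_{q₂}` monotone on `(0, ∞)`. Both tend to `0` at infinity: `F → 0` since `1 / f` is
integrable, and `f' → ∞` since `f'` is increasing and a bounded `f'` would make `f` grow at most
linearly, so that `1 / f` could not be integrable. Hence `G_{q₁} ≥ 0 ≥ G_{q₂}`. -/

open MeasureTheory Set Filter Topology

section Calculus

variable {g g' : ℝ → ℝ} {a L : ℝ}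

theorem monotoneOn_Ioi_of_hasDerivAt_nonneg (hg : ∀ x > a, HasDerivAt g (g' x) x)
    (hg' : ∀ x > a, 0 ≤ g' x) : MonotoneOn g (Ioi a) :=
  monotoneOn_of_hasDerivWithinAt_nonneg (convex_Ioi a)
    (fun x hx => (hg x hx).continuousAt.continuousWithinAt)
    (fun x hx => (hg x (interior_Ioi.subset hx)).hasDerivWithinAt)
    (fun x hx => hg' x (interior_Ioi.subset hx))

theorem le_of_hasDerivAt_nonneg_of_tendsto (hg : ∀ x > a, HasDerivAt g (g' x) x)
    (hg' : ∀ x > a, 0 ≤ g' x) (hlim : Tendsto g atTop (𝓝 L)) : ∀ x > a, g x ≤ L := by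
  intro x hx
  refine ge_of_tendsto hlim ?_
  filter_upwards [eventually_ge_atTop x] with y hy
  exact monotoneOn_Ioi_of_hasDerivAt_nonneg hg hg' hx (hx.trans_le hy) hy

theorem ge_of_hasDerivAt_nonpos_of_tendsto (hg : ∀ x > a, HasDerivAt g (g' x) x)
    (hg' : ∀ x > a, g' x ≤ 0) (hlim : Tendsto g atTop (𝓝 L)) : ∀ x > a, L ≤ g x := by
  intro x hx
  simpa using le_of_hasDerivAt_nonneg_of_tendsto (fun y hy => (hg y hy).neg)
    (fun y hy => neg_nonneg.2 (hg' y hy)) hlim.neg x hx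

end Calculus

theorem hasDerivAt_integral_Ioi {E : Type*} [NormedAddCommGroup E] [NormedSpace ℝ E]
    [CompleteSpace E] {g : ℝ → E} {a u : ℝ} (hg : IntegrableOn g (Ioi a)) (hu : a < u)
    (hcont : ContinuousAt g u) : HasDerivAt (fun x => ∫ s in Ioi x, g s) (-g u) u := by
  have hderiv : HasDerivAt (fun x => (∫ s in Ioi a, g s) - ∫ s in a..x, g s) (-g u) u :=
    (intervalIntegral.integral_hasDerivAt_right
      ((intervalIntegrable_iff_integrableOn_Ioc_of_le hu.le).2 (hg.mono_set Ioc_subset_Ioi_self))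
      (_root_.AEStronglyMeasurable.stronglyMeasurableAtFilter_of_mem hg.aestronglyMeasurable
        (Ioi_mem_nhds hu))
      hcont).const_sub _
  refine hderiv.congr_of_eventuallyEq ?_
  filter_upwards [Ioi_mem_nhds hu] with x hx
  rw [eq_sub_iff_add_eq',
    intervalIntegral.integral_interval_add_Ioi hg (hg.mono_set (Ioi_subset_Ioi hx.le))]

theorem not_integrableOn_one_div_of_deriv_le {f f' : ℝ → ℝ} {a b : ℝ}
    (hf : ∀ x > a, HasDerivAt f (f' x) x) (hpos : ∀ x > a, 0 < f x) (hb : ∀ x > a, f' x ≤ b) :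
    ¬ IntegrableOn (fun x => 1 / f x) (Ioi a) := by
  intro hint
  set c := |a| + 1
  have hc0 : 0 < c := by positivity
  have hac : a < c := by linarith [le_abs_self a]
  set C := f c / c + |b|
  have hlinear : ∀ x ≥ c, f x ≤ C * x := by
    intro x hx
    have hmono := monotoneOn_Ioi_of_hasDerivAt_nonneg
      (fun y hy => ((hasDerivAt_mul_const b).sub (hf y hy)))
      (fun y hy => sub_nonneg.2 (hb y hy)) hac (hac.trans_le hx) hx
    have h1 : f c ≤ f c / c * x := by
      rw [div_mul_eq_mul_div, le_div_iff₀ hc0]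
      exact mul_le_mul_of_nonneg_left hx (hpos c hac).le
    have h2 : b * (x - c) ≤ |b| * x :=
      calc b * (x - c) ≤ |b| * (x - c) := mul_le_mul_of_nonneg_right (le_abs_self b) (by linarith)
        _ ≤ |b| * x := mul_le_mul_of_nonneg_left (by linarith) (abs_nonneg b)
    simp only [Pi.sub_apply] at hmono
    nlinarith
  have hinv : IntegrableOn (fun x : ℝ => x⁻¹) (Ioi c) := by
    refine ((hint.mono_set (Ioi_subset_Ioi hac.le)).const_mul C).mono'
      measurable_inv.aestronglyMeasurable ?_
    filter_upwards [ae_restrict_mem measurableSet_Ioi] with x hx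
    have hx0 : 0 < x := hc0.trans hx
    have hfx : 0 < f x := hpos x (hac.trans hx)
    rw [Real.norm_eq_abs, abs_of_pos (inv_pos.2 hx0), mul_one_div, le_div_iff₀ hfx,
      inv_mul_le_iff₀ hx0]
    exact (hlinear x hx.le).trans_eq (mul_comm _ _)
  exact not_integrableOn_Ioi_inv hinv

theorem tendsto_atTop_of_integrableOn_one_div {f f' : ℝ → ℝ} {a : ℝ}
    (hf : ∀ x > a, HasDerivAt f (f' x) x) (hmono : MonotoneOn f' (Ioi a))
    (hpos : ∀ x > a, 0 < f x) (hint : IntegrableOn (fun x => 1 / f x) (Ioi a)) :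
    Tendsto f' atTop atTop := by
  rw [tendsto_atTop]
  intro b
  obtain ⟨c, hc, hbc⟩ : ∃ c > a, b ≤ f' c := by
    by_contra! h
    exact not_integrableOn_one_div_of_deriv_le hf hpos (fun x hx => (h x hx).le) hint
  filter_upwards [eventually_ge_atTop c] with x hx
  exact hbc.trans (hmono hc (hc.trans_le hx) hx)

theorem stmt_5_general (f f' f'' : ℝ → ℝ)
    (hf' : ∀ u > (0 : ℝ), HasDerivAt f (f' u) u)
    (hf'' : ∀ u > (0 : ℝ), HasDerivAt f' (f'' u) u)
    (hfpos : ∀ u > (0 : ℝ), 0 < f u)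
    (hf'pos : ∀ u > (0 : ℝ), 0 < f' u)
    (hf''pos : ∀ u > (0 : ℝ), 0 < f'' u)
    (hint : ∀ u > (0 : ℝ), MeasureTheory.IntegrableOn (fun s => 1 / f s) (Set.Ioi u))
    (q₁ q₂ : ℝ)
    (hq : ∀ u > (0 : ℝ),
      q₁ ≤ (f' u) ^ 2 / (f u * f'' u) ∧ (f' u) ^ 2 / (f u * f'' u) ≤ q₂) :
    ∀ u > (0 : ℝ),
      q₁ ≤ f' u * (∫ s in Set.Ioi u, 1 / f s) ∧
        f' u * (∫ s in Set.Ioi u, 1 / f s) ≤ q₂ := by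
  set F : ℝ → ℝ := fun u => ∫ s in Ioi u, 1 / f s
  have hF : ∀ x > 0, HasDerivAt F (-(1 / f x)) x := fun x hx =>
    hasDerivAt_integral_Ioi (hint (x / 2) (by positivity)) (by linarith)
      (continuousAt_const.div (hf' x hx).continuousAt (hfpos x hx).ne')
  have hf'top : Tendsto f' atTop atTop :=
    tendsto_atTop_of_integrableOn_one_div (a := 1) (fun x hx => hf' x (by linarith))
      ((monotoneOn_Ioi_of_hasDerivAt_nonneg hf'' fun x hx => (hf''pos x hx).le).mono
        (Ioi_subset_Ioi zero_le_one))
      (fun x hx => hfpos x (by linarith)) (hint 1 one_pos)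
  have hG : ∀ q, ∀ x > 0, HasDerivAt (fun x => F x - q / f' x)
      ((q - f' x ^ 2 / (f x * f'' x)) * (f'' x / f' x ^ 2)) x := by
    intro q x hx
    have := hfpos x hx; have := hf'pos x hx; have := hf''pos x hx
    refine ((hF x hx).sub ((hasDerivAt_const x q).div (hf'' x hx) (hf'pos x hx).ne')).congr_deriv ?_
    field_simp
    ring
  have hG0 : ∀ q, Tendsto (fun x => F x - q / f' x) atTop (𝓝 0) := fun q => by
    simpa using (tendsto_integral_Ioi_zero tendsto_id).sub (tendsto_const_nhds.div_atTop hf'top)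
  have hweight : ∀ x > 0, 0 ≤ f'' x / f' x ^ 2 := fun x hx => (div_pos (hf''pos x hx) (by
    have := hf'pos x hx; positivity)).le
  intro u hu
  have hlower := ge_of_hasDerivAt_nonpos_of_tendsto (hG q₁) (fun x hx =>
    mul_nonpos_of_nonpos_of_nonneg (sub_nonpos.2 (hq x hx).1) (hweight x hx)) (hG0 q₁) u hu
  have hupper := le_of_hasDerivAt_nonneg_of_tendsto (hG q₂) (fun x hx =>
    mul_nonneg (sub_nonneg.2 (hq x hx).2) (hweight x hx)) (hG0 q₂) u hu
  rw [sub_nonneg, div_le_iff₀ (hf'pos u hu)] at hlower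
  rw [sub_nonpos, le_div_iff₀ (hf'pos u hu)] at hupper
  constructor <;> linarith

theorem stmt_5 (f f' f'' : ℝ → ℝ)
    (hf' : ∀ u > (0 : ℝ), HasDerivAt f (f' u) u)
    (hf'' : ∀ u > (0 : ℝ), HasDerivAt f' (f'' u) u)
    (hf''c : ContinuousOn f'' (Set.Ioi 0))
    (hfpos : ∀ u > (0 : ℝ), 0 < f u)
    (hf'pos : ∀ u > (0 : ℝ), 0 < f' u)
    (hf''pos : ∀ u > (0 : ℝ), 0 < f'' u)
    (hint : ∀ u > (0 : ℝ), MeasureTheory.IntegrableOn (fun s => 1 / f s) (Set.Ioi u))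
    (q₁ q₂ : ℝ) (hq₁ : 0 < q₁) (hq₂ : 0 < q₂)
    (hq : ∀ u > (0 : ℝ),
      q₁ ≤ (f' u) ^ 2 / (f u * f'' u) ∧ (f' u) ^ 2 / (f u * f'' u) ≤ q₂) :
    ∀ u > (0 : ℝ),
      q₁ ≤ f' u * (∫ s in Set.Ioi u, 1 / f s) ∧
        f' u * (∫ s in Set.Ioi u, 1 / f s) ≤ q₂ :=
  stmt_5_general f f' f'' hf' hf'' hfpos hf'pos hf''pos hint q₁ q₂ hq
end

section
/- Let N ≥ 3 and let w ∈ C²((0,R]) ∩ C¹([0,R]) satisfy w'' + ((N-1)/r)·w' + ((N-2)²/(4r²))·w > 0 for 0 < r < R, with w'(0) = 0 and w(0) > 0. Then w(r) > 0 for all 0 ≤ r ≤ R. -/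
/-!
Put `α = (N - 2) / 2`, so that `N - 1 = 2α + 1` and `(N - 2)² / 4 = α²`. With `u = r^α w`,
the differential inequality reads `(r u')' > 0`, because
`(r u')' = (r^α (α w + r w'))' = r^(α+1) (w'' + (2α+1)/r · w' + α²/r² · w)`.
Since `α > 0`, `r u'` vanishes at `r = 0`, hence is positive on `(0, R]`; so `u` is strictly
increasing from `u(0) = 0`, which makes `u`, and with it `w`, positive on `(0, R]`.
-/

open Set

lemma pos_of_hasDerivAt_pos {f f' : ℝ → ℝ} {a b x : ℝ} (hf : ContinuousOn f (Icc a b))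
    (hf' : ∀ y ∈ Ioo a b, HasDerivAt f (f' y) y) (hpos : ∀ y ∈ Ioo a b, 0 < f' y)
    (ha : f a = 0) (hx : x ∈ Ioc a b) : 0 < f x := by
  have hmono : StrictMonoOn f (Icc a b) := by
    refine strictMonoOn_of_deriv_pos (convex_Icc a b) hf fun y hy => ?_
    rw [interior_Icc] at hy
    rw [(hf' y hy).deriv]
    exact hpos y hy
  simpa [ha] using hmono (left_mem_Icc.2 (hx.1.le.trans hx.2)) (Ioc_subset_Icc_self hx) hx.1

lemma hasDerivAt_rpow_mul {f : ℝ → ℝ} {f' α r : ℝ} (hr : 0 < r) (hf : HasDerivAt f f' r) :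
    HasDerivAt (fun s => s ^ α * f s) (r ^ (α - 1) * (α * f r + r * f')) r := by
  refine ((Real.hasDerivAt_rpow_const (p := α) (Or.inl hr.ne')).mul hf).congr_deriv ?_
  rw [show r ^ α = r ^ (α - 1) * r by rw [← Real.rpow_add_one hr.ne']; ring_nf]
  ring

section Radial

variable {w w' : ℝ → ℝ} {α R r : ℝ}

lemma hasDerivAt_rpow_mul_euler {w'' : ℝ} (hr : 0 < r) (hw : HasDerivAt w (w' r) r)
    (hw' : HasDerivAt w' w'' r) :
    HasDerivAt (fun s => s ^ α * (α * w s + s * w' s))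
      (r ^ (α + 1) * (w'' + (2 * α + 1) / r * w' r + α ^ 2 / r ^ 2 * w r)) r := by
  refine (hasDerivAt_rpow_mul hr
    ((hw.const_mul α).fun_add ((hasDerivAt_id' r).fun_mul hw'))).congr_deriv ?_
  rw [show r ^ (α + 1) = r ^ (α - 1) * r ^ 2 by
    rw [← Real.rpow_natCast, ← Real.rpow_add hr]; congr 1; push_cast; ring]
  field_simp
  ring

lemma euler_combination_pos (hα : 0 < α) (hwc : ContinuousOn w (Icc 0 R))
    (hw'c : ContinuousOn w' (Icc 0 R)) (hw : ∀ r ∈ Ioo 0 R, HasDerivAt w (w' r) r)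
    {w'' : ℝ → ℝ} (hw' : ∀ r ∈ Ioo 0 R, HasDerivAt w' (w'' r) r)
    (hineq : ∀ r ∈ Ioo 0 R, 0 < w'' r + (2 * α + 1) / r * w' r + α ^ 2 / r ^ 2 * w r)
    (hr : r ∈ Ioc 0 R) : 0 < α * w r + r * w' r := by
  have hflux := pos_of_hasDerivAt_pos (f := fun s => s ^ α * (α * w s + s * w' s))
    ((continuousOn_id.rpow_const fun _ _ => Or.inr hα.le).mul
      ((continuousOn_const.mul hwc).add (continuousOn_id.mul hw'c)))
    (fun s hs => hasDerivAt_rpow_mul_euler hs.1 (hw s hs) (hw' s hs))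
    (fun s hs => mul_pos (Real.rpow_pos_of_pos hs.1 _) (hineq s hs))
    (by simp [Real.zero_rpow hα.ne']) hr
  exact pos_of_mul_pos_right hflux (Real.rpow_nonneg hr.1.le α)

lemma pos_of_radial_ineq (hα : 0 < α) (hwc : ContinuousOn w (Icc 0 R))
    (hw'c : ContinuousOn w' (Icc 0 R)) (hw : ∀ r ∈ Ioo 0 R, HasDerivAt w (w' r) r)
    {w'' : ℝ → ℝ} (hw' : ∀ r ∈ Ioo 0 R, HasDerivAt w' (w'' r) r)
    (hineq : ∀ r ∈ Ioo 0 R, 0 < w'' r + (2 * α + 1) / r * w' r + α ^ 2 / r ^ 2 * w r)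
    (hr : r ∈ Ioc 0 R) : 0 < w r := by
  have hu := pos_of_hasDerivAt_pos (f := fun s => s ^ α * w s)
    ((continuousOn_id.rpow_const fun _ _ => Or.inr hα.le).mul hwc)
    (fun s hs => hasDerivAt_rpow_mul hs.1 (hw s hs))
    (fun s hs => mul_pos (Real.rpow_pos_of_pos hs.1 _)
      (euler_combination_pos hα hwc hw'c hw hw' hineq (Ioo_subset_Ioc_self hs)))
    (by simp [Real.zero_rpow hα.ne']) hr
  exact pos_of_mul_pos_right hu (Real.rpow_nonneg hr.1.le α)

end Radial

theorem stmt_9_general (N : ℕ) (hN : 3 ≤ N) (R : ℝ)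
    (w w' w'' : ℝ → ℝ)
    (hw : ∀ r ∈ Set.Icc (0 : ℝ) R, HasDerivAt w (w' r) r)
    (hw' : ∀ r ∈ Set.Ioc (0 : ℝ) R, HasDerivAt w' (w'' r) r)
    (hw'cont : ContinuousOn w' (Set.Icc 0 R))
    (hineq : ∀ r ∈ Set.Ioo (0 : ℝ) R,
      0 < w'' r + ((N : ℝ) - 1) / r * w' r + ((N : ℝ) - 2) ^ 2 / (4 * r ^ 2) * w r)
    (h00 : 0 < w 0) :
    ∀ r ∈ Set.Icc (0 : ℝ) R, 0 < w r := by
  have hα : 0 < ((N : ℝ) - 2) / 2 := by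
    have : (3 : ℝ) ≤ N := by exact_mod_cast hN
    linarith
  intro r hr
  rcases hr.1.eq_or_lt with rfl | hr0
  · exact h00
  refine pos_of_radial_ineq hα (fun s hs => (hw s hs).continuousAt.continuousWithinAt) hw'cont
    (fun s hs => hw s (Ioo_subset_Icc_self hs)) (fun s hs => hw' s (Ioo_subset_Ioc_self hs))
    (fun s hs => ?_) ⟨hr0, hr.2⟩
  convert hineq s hs using 3 <;> ring

theorem stmt_9 (N : ℕ) (hN : 3 ≤ N) (R : ℝ) (hR : 0 < R)
    (w w' w'' : ℝ → ℝ)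
    (hw : ∀ r ∈ Set.Icc (0 : ℝ) R, HasDerivAt w (w' r) r)
    (hw' : ∀ r ∈ Set.Ioc (0 : ℝ) R, HasDerivAt w' (w'' r) r)
    (hw'cont : ContinuousOn w' (Set.Icc 0 R))
    (hineq : ∀ r ∈ Set.Ioo (0 : ℝ) R,
      0 < w'' r + ((N : ℝ) - 1) / r * w' r + ((N : ℝ) - 2) ^ 2 / (4 * r ^ 2) * w r)
    (h0 : w' 0 = 0) (h00 : 0 < w 0) :
    ∀ r ∈ Set.Icc (0 : ℝ) R, 0 < w r :=
  stmt_9_general N hN R w w' w'' hw hw' hw'cont hineq h00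
end

section
/- Under the scaling relation F(u(x)) = λ²·G(v(y)), y = x/λ, between C² functions u, v (with f, g, F, G as in the generalized scaling setup), one has the identity (1/f(u))·(Δu + f(u) - (f'(u)/f(u))|∇u|²) = (1/g(v))·(Δv + g(v) - (g'(v)/g(v))|∇v|²), where Laplacians and gradients are in the x and y variables respectively. -/
/-!
With `Φ = F ∘ u`, the chain rule gives `ΔΦ = -(1/f(u)) Δu + (f'(u)/f(u)²) |∇u|²`, so the left-hand
side is `1 - ΔΦ(x)`; likewise the right-hand side is `1 - ΔΨ(y)` with `Ψ = G ∘ v`. Since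
`Φ(x) = λ² Ψ(x/λ)` and `Δ[Ψ(·/λ)] = λ⁻² (ΔΨ)(·/λ)`, the two Laplacians agree.
-/

noncomputable def lap {N : ℕ} (u : EuclideanSpace ℝ (Fin N) → ℝ)
    (x : EuclideanSpace ℝ (Fin N)) : ℝ :=
  ∑ i : Fin N,
    fderiv ℝ (fun z => fderiv ℝ u z (EuclideanSpace.single i 1)) x
      (EuclideanSpace.single i 1)

open EuclideanSpace

theorem HasDerivAt.neg_one_div {φ : ℝ → ℝ} {φ' t : ℝ} (h : HasDerivAt φ φ' t) (ht : φ t ≠ 0) :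
    HasDerivAt (fun s => -(1 / φ s)) (φ' / φ t ^ 2) t := by
  have := (h.inv ht).neg
  rw [neg_div, neg_neg] at this
  simp only [one_div]
  exact this

section

variable {N : ℕ}

theorem fderiv_const_mul_comp_smul_apply (u : EuclideanSpace ℝ (Fin N) → ℝ) (a c : ℝ)
    (x e : EuclideanSpace ℝ (Fin N)) :
    fderiv ℝ (fun z => a * u (c • z)) x e = a * c * fderiv ℝ u (c • x) e := by
  change fderiv ℝ (a • fun z => u (c • z)) x e = _
  rw [fderiv_const_smul_field, Pi.smul_apply, fderiv_comp_smul]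
  simp [mul_assoc]

theorem lap_const_mul_comp_smul (u : EuclideanSpace ℝ (Fin N) → ℝ) (a c : ℝ)
    (x : EuclideanSpace ℝ (Fin N)) :
    lap (fun z => a * u (c • z)) x = a * c ^ 2 * lap u (c • x) := by
  simp only [lap, fderiv_const_mul_comp_smul_apply, Finset.mul_sum]
  refine Finset.sum_congr rfl fun i _ => ?_
  rw [fderiv_const_mul_comp_smul_apply (fun z => fderiv ℝ u z (single i 1))]
  ring

theorem norm_gradient_sq_eq_sum (u : EuclideanSpace ℝ (Fin N) → ℝ)
    (x : EuclideanSpace ℝ (Fin N)) :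
    ‖gradient u x‖ ^ 2 = ∑ i, fderiv ℝ u x (single i 1) ^ 2 := by
  rw [real_norm_sq_eq]
  congr! 2 with i
  rw [← toDual_gradient, InnerProductSpace.toDual_apply_apply, inner_single_right]
  simp

theorem ContDiff.differentiable_fderiv_apply {u : EuclideanSpace ℝ (Fin N) → ℝ}
    (hu : ContDiff ℝ 2 u) (e : EuclideanSpace ℝ (Fin N)) :
    Differentiable ℝ (fun z => fderiv ℝ u z e) :=
  ((hu.fderiv_right (m := 1) (by norm_num)).clm_apply contDiff_const).differentiable one_ne_zero

variable {φ φ' : ℝ → ℝ} {u : EuclideanSpace ℝ (Fin N) → ℝ}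

theorem fderiv_comp_apply_of_hasDerivAt (hu : Differentiable ℝ u)
    (hφ : ∀ z, HasDerivAt φ (φ' (u z)) (u z)) (z e : EuclideanSpace ℝ (Fin N)) :
    fderiv ℝ (fun z => φ (u z)) z e = φ' (u z) * fderiv ℝ u z e := by
  change fderiv ℝ (φ ∘ u) z e = _
  rw [((hφ z).comp_hasFDerivAt z (hu z).hasFDerivAt).fderiv]
  rfl

theorem hasFDerivAt_fderiv_comp_apply (hu : ContDiff ℝ 2 u)
    (hφ : ∀ z, HasDerivAt φ (φ' (u z)) (u z)) {φ'' : ℝ} {x : EuclideanSpace ℝ (Fin N)}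
    (hφ' : HasDerivAt φ' φ'' (u x)) (e : EuclideanSpace ℝ (Fin N)) :
    HasFDerivAt (fun z => fderiv ℝ (fun z => φ (u z)) z e)
      (φ' (u x) • fderiv ℝ (fun z => fderiv ℝ u z e) x + fderiv ℝ u x e • (φ'' • fderiv ℝ u x))
      x := by
  have hu1 := hu.differentiable two_ne_zero
  simp only [fderiv_comp_apply_of_hasDerivAt hu1 hφ]
  exact (hφ'.comp_hasFDerivAt x (hu1 x).hasFDerivAt).mul
    (hu.differentiable_fderiv_apply e x).hasFDerivAt

theorem lap_comp_of_hasDerivAt (hu : ContDiff ℝ 2 u)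
    (hφ : ∀ z, HasDerivAt φ (φ' (u z)) (u z)) {φ'' : ℝ} {x : EuclideanSpace ℝ (Fin N)}
    (hφ' : HasDerivAt φ' φ'' (u x)) :
    lap (fun z => φ (u z)) x = φ' (u x) * lap u x + φ'' * ‖gradient u x‖ ^ 2 := by
  simp only [lap, (hasFDerivAt_fderiv_comp_apply hu hφ hφ' _).fderiv, norm_gradient_sq_eq_sum,
    Finset.mul_sum, ← Finset.sum_add_distrib]
  refine Finset.sum_congr rfl fun i _ => ?_
  simp only [add_apply, smul_apply, smul_eq_mul]
  ring

end

theorem stmt_15_general (N : ℕ)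
    (f g f' g' F G : ℝ → ℝ) (lam : ℝ) (hlam : 0 < lam)
    (hf' : ∀ t > (0 : ℝ), HasDerivAt f (f' t) t)
    (hg' : ∀ t, HasDerivAt g (g' t) t)
    (hfpos : ∀ t > (0 : ℝ), 0 < f t) (hgpos : ∀ t, 0 < g t)
    (hF : ∀ t > (0 : ℝ), HasDerivAt F (-(1 / f t)) t)
    (hG : ∀ t, HasDerivAt G (-(1 / g t)) t)
    (u v : EuclideanSpace ℝ (Fin N) → ℝ)
    (hu : ContDiff ℝ 2 u) (hv : ContDiff ℝ 2 v)
    (hupos : ∀ x, 0 < u x)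
    (hrel : ∀ x, F (u x) = lam ^ 2 * G (v (lam⁻¹ • x))) :
    ∀ x : EuclideanSpace ℝ (Fin N),
      (1 / f (u x)) *
          (lap u x + f (u x) - f' (u x) / f (u x) * ‖gradient u x‖ ^ 2)
        = (1 / g (v (lam⁻¹ • x))) *
            (lap v (lam⁻¹ • x) + g (v (lam⁻¹ • x))
              - g' (v (lam⁻¹ • x)) / g (v (lam⁻¹ • x))
                  * ‖gradient v (lam⁻¹ • x)‖ ^ 2) := by
  intro x
  set y := lam⁻¹ • x
  have hf0 : f (u x) ≠ 0 := (hfpos _ (hupos x)).ne'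
  have hg0 : g (v y) ≠ 0 := (hgpos _).ne'
  have hlapF := lap_comp_of_hasDerivAt hu (fun z => hF _ (hupos z))
    ((hf' _ (hupos x)).neg_one_div hf0)
  have hlapG := lap_comp_of_hasDerivAt hv (fun z => hG _) ((hg' (v y)).neg_one_div hg0)
  have hscale : lap (fun z => F (u z)) x = lap (fun z => G (v z)) y := by
    rw [funext hrel, lap_const_mul_comp_smul (fun z => G (v z)), inv_pow,
      mul_inv_cancel₀ (pow_ne_zero 2 hlam.ne'), one_mul]
  calc (1 / f (u x)) * (lap u x + f (u x) - f' (u x) / f (u x) * ‖gradient u x‖ ^ 2)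
      = 1 - lap (fun z => F (u z)) x := by rw [hlapF]; field_simp; ring
    _ = 1 - lap (fun z => G (v z)) y := by rw [hscale]
    _ = (1 / g (v y)) * (lap v y + g (v y) - g' (v y) / g (v y) * ‖gradient v y‖ ^ 2) := by
      rw [hlapG]; field_simp; ring

theorem stmt_15 (N : ℕ) (hN : 1 ≤ N)
    (f g f' g' F G : ℝ → ℝ) (lam : ℝ) (hlam : 0 < lam)
    (hf' : ∀ t > (0 : ℝ), HasDerivAt f (f' t) t)
    (hg' : ∀ t, HasDerivAt g (g' t) t)
    (hfpos : ∀ t > (0 : ℝ), 0 < f t) (hgpos : ∀ t, 0 < g t)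
    (hf'pos : ∀ t > (0 : ℝ), 0 < f' t) (hg'pos : ∀ t, 0 < g' t)
    (hF : ∀ t > (0 : ℝ), HasDerivAt F (-(1 / f t)) t)
    (hFpos : ∀ t > (0 : ℝ), 0 < F t)
    (hG : ∀ t, HasDerivAt G (-(1 / g t)) t)
    (hGpos : ∀ t, 0 < G t)
    (u v : EuclideanSpace ℝ (Fin N) → ℝ)
    (hu : ContDiff ℝ 2 u) (hv : ContDiff ℝ 2 v)
    (hupos : ∀ x, 0 < u x)
    (hrel : ∀ x, F (u x) = lam ^ 2 * G (v (lam⁻¹ • x))) :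
    ∀ x : EuclideanSpace ℝ (Fin N),
      (1 / f (u x)) *
          (lap u x + f (u x) - f' (u x) / f (u x) * ‖gradient u x‖ ^ 2)
        = (1 / g (v (lam⁻¹ • x))) *
            (lap v (lam⁻¹ • x) + g (v (lam⁻¹ • x))
              - g' (v (lam⁻¹ • x)) / g (v (lam⁻¹ • x))
                  * ‖gradient v (lam⁻¹ • x)‖ ^ 2) :=
  stmt_15_general N f g f' g' F G lam hlam hf' hg' hfpos hgpos hF hG u v hu hv hupos hrel
end
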